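/- Let n be an even positive integer. There is no plateaued APN function F : 𝔽_2^n → 𝔽_2^n whose value distribution consists of exactly two elements β₁ ≠ β₂ of 𝔽_2^n with |F⁻¹(β₁)| = |F⁻¹(β₂)| = 2 while every other element β of 𝔽_2^n satisfies |F⁻¹(β)| ∈ {0, 3} (equivalently, F has image of size (2^n + 2)/3 with two fibers of size 2 and all remaining nonempty fibers of size 3). -/

import Mathlib

open Finset

/-- The integer-valued Walsh transform of `F : 𝔽_2^n → 𝔽_2^n`:
`W_F(b,a) = ∑_x (-1)^{⟨b,F(x)⟩ + ⟨a,x⟩}`. -/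
def walshB (n : ℕ) (F : (Fin n → ZMod 2) → (Fin n → ZMod 2))
    (b a : Fin n → ZMod 2) : ℤ :=
  ∑ x : Fin n → ZMod 2, (-1 : ℤ) ^ ((∑ i, b i * F x i).val + (∑ i, a i * x i).val)

/-- The imbalance `Nb_F = 2^{-n} ∑_{b ≠ 0} W_F(b,0)²`. -/
noncomputable def NbB (n : ℕ) (F : (Fin n → ZMod 2) → (Fin n → ZMod 2)) : ℝ :=
  ((2 : ℝ) ^ n)⁻¹ *
    ∑ b ∈ univ.filter (fun b : Fin n → ZMod 2 => b ≠ 0), ((walshB n F b 0 : ℝ)) ^ 2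

/-- `F` is APN: for every `a ≠ 0` and every `b`, the equation `F(x+a) + F(x) = b` has at
most 2 solutions. -/
def IsAPNB (n : ℕ) (F : (Fin n → ZMod 2) → (Fin n → ZMod 2)) : Prop :=
  ∀ a : Fin n → ZMod 2, a ≠ 0 → ∀ b : Fin n → ZMod 2,
    (univ.filter fun x => F (x + a) + F x = b).card ≤ 2

/-- The component `F_b` is `t`-plateaued: `|W_F(b,a)| ∈ {0, 2^{(n+t)/2}}` for all `a`,
expressed via squares of the integer Walsh coefficients. -/
def IsTPlateauedB (n : ℕ) (F : (Fin n → ZMod 2) → (Fin n → ZMod 2))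
    (b : Fin n → ZMod 2) (t : ℕ) : Prop :=
  ∀ a : Fin n → ZMod 2, walshB n F b a = 0 ∨ (walshB n F b a) ^ 2 = 2 ^ (n + t)

/-- `F` is plateaued: every nonzero component is `t_b`-plateaued for some `t_b`. -/
def IsPlateauedB (n : ℕ) (F : (Fin n → ZMod 2) → (Fin n → ZMod 2)) : Prop :=
  ∀ b : Fin n → ZMod 2, b ≠ 0 → ∃ t : ℕ, IsTPlateauedB n F b t

/-- The component `F_b` is bent: `|W_F(b,a)| = 2^{n/2}` for all `a`, i.e.
`W_F(b,a)² = 2^n`. -/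
def IsBentB (n : ℕ) (F : (Fin n → ZMod 2) → (Fin n → ZMod 2))
    (b : Fin n → ZMod 2) : Prop :=
  ∀ a : Fin n → ZMod 2, (walshB n F b a) ^ 2 = 2 ^ n

instance (n : ℕ) (F : (Fin n → ZMod 2) → (Fin n → ZMod 2)) (b : Fin n → ZMod 2) :
    Decidable (IsBentB n F b) := by
  unfold IsBentB; infer_instance

/-
Write `N = 2^n`. Counting the solutions of `F(x+s) + F(x) = F(y+s) + F(y)`, APN-ness gives the
fourth moment `∑_{b,a} W_F(b,a)^4 = N^3 (3N - 2)`, while the prescribed value distribution gives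
`∑_b W_F(b,0)^2 = N ∑_β |F⁻¹(β)|^2 = N (3N - 4)`. A `t_b`-plateaued component has
`∑_a W_F(b,a)^4 = 2^{n+t_b} N^2`, so the shortfalls `d_b = N^2 (2^{n+t_b} - W_F(b,0)^2) ≥ 0` sum
to `2N^3`. But `d_b = 0` unless `W_F(b,0) = 0`, and then `t_b ≥ 2`, since `t_b` is even (as `n` is)
and a bent component has no vanishing Walsh coefficient; so every nonzero `d_b` is at least `4N^3`.
-/

def parityChar (u : ZMod 2) : ℤ := (-1) ^ u.val

lemma parityChar_zero : parityChar 0 = 1 := rfl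

lemma parityChar_one : parityChar 1 = -1 := rfl

lemma parityChar_add (u v : ZMod 2) : parityChar (u + v) = parityChar u * parityChar v := by
  revert u v; decide

lemma parityChar_sq (u : ZMod 2) : parityChar u ^ 2 = 1 := by
  revert u; decide

section Hadamard

variable {ι : Type*} [Fintype ι] [DecidableEq ι]

lemma sum_parityChar_dotProduct (y : ι → ZMod 2) :
    ∑ v : ι → ZMod 2, parityChar (v ⬝ᵥ y) = if y = 0 then 2 ^ Fintype.card ι else 0 := by
  split_ifs with hy
  · simp [hy, parityChar_zero]
  obtain ⟨i, hi⟩ : ∃ i, y i ≠ 0 := Function.ne_iff.mp hy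
  have hflip : ∀ v, parityChar ((v + Pi.single i 1) ⬝ᵥ y) = -parityChar (v ⬝ᵥ y) := by
    intro v
    have : Pi.single i 1 ⬝ᵥ y = 1 := by
      rw [single_dotProduct, one_mul]
      generalize y i = u at hi; decide +revert
    rw [add_dotProduct, this, parityChar_add, parityChar_one, mul_neg_one]
  have := Equiv.sum_comp (Equiv.addRight (Pi.single i 1)) fun v => parityChar (v ⬝ᵥ y)
  simp only [Equiv.coe_addRight, hflip, sum_neg_distrib] at this
  linarith

def walshHadamard (g : (ι → ZMod 2) → ℤ) (a : ι → ZMod 2) : ℤ :=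
  ∑ s, g s * parityChar (a ⬝ᵥ s)

lemma sum_walshHadamard_sq (g : (ι → ZMod 2) → ℤ) :
    ∑ a, walshHadamard g a ^ 2 = 2 ^ Fintype.card ι * ∑ s, g s ^ 2 := by
  have hexpand : ∀ a, walshHadamard g a ^ 2
      = ∑ s, ∑ u, g s * g u * parityChar (a ⬝ᵥ (s + u)) := by
    intro a
    rw [walshHadamard, sq, sum_mul_sum]
    refine sum_congr rfl fun s _ => sum_congr rfl fun u _ => ?_
    rw [dotProduct_add, parityChar_add]; ring
  have hdiag : ∀ s u : ι → ZMod 2, s + u = 0 ↔ u = s := by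
    intro s u
    rw [add_eq_zero_iff_eq_neg', ZModModule.neg_eq_self]
  simp only [hexpand]
  rw [sum_comm, mul_sum]
  refine sum_congr rfl fun s _ => ?_
  rw [sum_comm]
  simp only [← mul_sum, sum_parityChar_dotProduct, hdiag]
  simp [sq, mul_comm]

lemma walshHadamard_sq (g : (ι → ZMod 2) → ℤ) (a : ι → ZMod 2) :
    walshHadamard g a ^ 2 = walshHadamard (fun s => ∑ x, g (x + s) * g x) a := by
  rw [walshHadamard, sq, sum_mul_sum, walshHadamard]
  simp only [sum_mul]
  conv_rhs => rw [sum_comm]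
  refine sum_congr rfl fun x _ => ?_
  rw [← Equiv.sum_comp (Equiv.addLeft x)]
  refine sum_congr rfl fun s _ => ?_
  have hsq := parityChar_sq (a ⬝ᵥ x)
  simp only [Equiv.coe_addLeft, dotProduct_add, parityChar_add]
  linear_combination g x * g (x + s) * parityChar (a ⬝ᵥ s) * hsq

end Hadamard

lemma Finset.sum_eq_zero_or_le_sum {ι M : Type*} [AddCommMonoid M] [PartialOrder M]
    [IsOrderedAddMonoid M] {s : Finset ι} {f : ι → M} {m : M} (hm : 0 ≤ m)
    (h : ∀ i ∈ s, f i = 0 ∨ m ≤ f i) : ∑ i ∈ s, f i = 0 ∨ m ≤ ∑ i ∈ s, f i := by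
  by_cases hzero : ∀ i ∈ s, f i = 0
  · exact Or.inl (sum_eq_zero hzero)
  push Not at hzero
  obtain ⟨i, hi, hfi⟩ := hzero
  have hnonneg : ∀ j ∈ s, 0 ≤ f j := fun j hj => (h j hj).elim (fun h => h.ge) hm.trans
  exact Or.inr (((h i hi).resolve_left hfi).trans (single_le_sum hnonneg hi))

lemma even_of_sq_eq_two_pow {w : ℤ} {m : ℕ} (h : w ^ 2 = 2 ^ m) : Even m := by
  have h' : w.natAbs ^ 2 = 2 ^ m := by simpa using congrArg Int.natAbs h
  have hval := congrArg (padicValNat 2) h'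
  rw [padicValNat.pow, padicValNat.prime_pow] at hval
  exact ⟨padicValNat 2 w.natAbs, by omega⟩

section Fibers

variable {α β : Type*} [Fintype α] [DecidableEq β]

def fiberCard (G : α → β) (y : β) : ℕ := #{x | G x = y}

lemma sum_fiberCard [Fintype β] (G : α → β) : ∑ y, fiberCard G y = Fintype.card α :=
  (card_eq_sum_card_fiberwise fun x _ => mem_univ (G x)).symm

lemma sum_fiberCard_const_sq [Fintype β] (y : β) :
    ∑ c, (fiberCard (fun _ : α => y) c : ℤ) ^ 2 = Fintype.card α ^ 2 := by
  rw [sum_eq_single y]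
  · simp [fiberCard]
  · intro c _ hc
    simp [fiberCard, Ne.symm hc]
  · simp

lemma sum_fiberCard_sq_of_two_fibers_card_two [Fintype β] {G : α → β} {β₁ β₂ : β}
    (hβ : β₁ ≠ β₂) (h₁ : fiberCard G β₁ = 2) (h₂ : fiberCard G β₂ = 2)
    (hrest : ∀ y, y ≠ β₁ → y ≠ β₂ → fiberCard G y = 0 ∨ fiberCard G y = 3) :
    ∑ y, (fiberCard G y : ℤ) ^ 2 = 3 * Fintype.card α - 4 := by
  have hdefect : ∑ y, (3 * (fiberCard G y : ℤ) - (fiberCard G y : ℤ) ^ 2) = 4 := by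
    rw [← sum_subset (subset_univ {β₁, β₂}), sum_pair hβ, h₁, h₂]
    · norm_num
    · intro y _ hy
      simp only [mem_insert, mem_singleton, not_or] at hy
      rcases hrest y hy.1 hy.2 with h | h <;> simp [h]
  rw [sum_sub_distrib, ← mul_sum] at hdefect
  have hcard : ∑ y, (fiberCard G y : ℤ) = Fintype.card α := by exact_mod_cast sum_fiberCard G
  linarith

variable {ι : Type*} [Fintype ι] [DecidableEq ι]

lemma sum_parityChar_dotProduct_comp (G : α → ι → ZMod 2) (b : ι → ZMod 2) :
    ∑ x, parityChar (b ⬝ᵥ G x) = walshHadamard (fun y => (fiberCard G y : ℤ)) b := by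
  rw [walshHadamard, ← sum_fiberwise' univ G fun y => parityChar (b ⬝ᵥ y)]
  simp [fiberCard]

lemma sum_sq_sum_parityChar_dotProduct_comp (G : α → ι → ZMod 2) :
    ∑ b, (∑ x, parityChar (b ⬝ᵥ G x)) ^ 2 = 2 ^ Fintype.card ι * ∑ y, (fiberCard G y : ℤ) ^ 2 := by
  simp only [sum_parityChar_dotProduct_comp]
  exact sum_walshHadamard_sq _

end Fibers

section Walsh

variable {n : ℕ} (F : (Fin n → ZMod 2) → Fin n → ZMod 2)

lemma walshB_eq_walshHadamard (b a : Fin n → ZMod 2) :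
    walshB n F b a = walshHadamard (fun x => parityChar (b ⬝ᵥ F x)) a := by
  refine sum_congr rfl fun x _ => ?_
  rw [pow_add]
  rfl

lemma sum_walshB_sq (b : Fin n → ZMod 2) : ∑ a, walshB n F b a ^ 2 = (2 ^ n) ^ 2 := by
  simp only [walshB_eq_walshHadamard, sum_walshHadamard_sq, parityChar_sq]
  simp [sq]

lemma walshB_zero_left (a : Fin n → ZMod 2) :
    walshB n F 0 a = if a = 0 then 2 ^ n else 0 := by
  simp only [walshB_eq_walshHadamard, walshHadamard, zero_dotProduct, parityChar_zero, one_mul,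
    dotProduct_comm a, sum_parityChar_dotProduct, Fintype.card_fin]

lemma isTPlateauedB_zero_left : IsTPlateauedB n F 0 n := by
  intro a
  rw [walshB_zero_left]
  split_ifs
  · right; ring
  · left; rfl

lemma sum_walshB_zero_right_sq :
    ∑ b, walshB n F b 0 ^ 2 = 2 ^ n * ∑ y, (fiberCard F y : ℤ) ^ 2 := by
  simp only [walshB_eq_walshHadamard, walshHadamard, zero_dotProduct, parityChar_zero, mul_one]
  simpa using sum_sq_sum_parityChar_dotProduct_comp F

lemma sum_sum_walshB_pow_four_eq_sum_sum_fiberCard_sq :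
    ∑ b, ∑ a, walshB n F b a ^ 4
      = (2 ^ n) ^ 2 * ∑ s, ∑ c, (fiberCard (fun x => F (x + s) + F x) c : ℤ) ^ 2 := by
  have hsq : ∀ b a, walshB n F b a ^ 4
      = walshHadamard (fun s => ∑ x, parityChar (b ⬝ᵥ (F (x + s) + F x))) a ^ 2 := by
    intro b a
    rw [show 4 = 2 * 2 from rfl, pow_mul, walshB_eq_walshHadamard, walshHadamard_sq]
    simp only [dotProduct_add, parityChar_add]
  calc ∑ b, ∑ a, walshB n F b a ^ 4
        = 2 ^ n * ∑ s, ∑ b, (∑ x, parityChar (b ⬝ᵥ (F (x + s) + F x))) ^ 2 := by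
          simp only [hsq, sum_walshHadamard_sq, Fintype.card_fin, ← mul_sum]
          rw [sum_comm]
    _ = _ := by
      simp only [sum_sq_sum_parityChar_dotProduct_comp, Fintype.card_fin, ← mul_sum]
      ring

end Walsh

section APN

variable {n : ℕ} {F : (Fin n → ZMod 2) → Fin n → ZMod 2}

lemma IsAPNB.fiberCard_eq_zero_or_two (hF : IsAPNB n F) {s : Fin n → ZMod 2} (hs : s ≠ 0)
    (c : Fin n → ZMod 2) :
    fiberCard (fun x => F (x + s) + F x) c = 0 ∨ fiberCard (fun x => F (x + s) + F x) c = 2 := by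
  rcases Nat.eq_zero_or_pos (fiberCard (fun x => F (x + s) + F x) c) with h | h
  · exact Or.inl h
  refine Or.inr (le_antisymm (hF s hs c) ?_)
  obtain ⟨x, hx⟩ := card_pos.mp h
  rw [mem_filter] at hx
  -- solutions come in pairs `{x, x + s}`
  have hxs : x + s ∈ ({x | F (x + s) + F x = c} : Finset _) := by
    rw [mem_filter, add_assoc, ZModModule.add_self, add_zero, add_comm (F x)]
    exact ⟨mem_univ _, hx.2⟩
  have hne : x + s ≠ x := fun h => hs (by simpa using h)
  exact one_lt_card.mpr ⟨x + s, hxs, x, mem_filter.mpr hx, hne⟩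

lemma IsAPNB.sum_fiberCard_sq (hF : IsAPNB n F) {s : Fin n → ZMod 2} (hs : s ≠ 0) :
    ∑ c, (fiberCard (fun x => F (x + s) + F x) c : ℤ) ^ 2 = 2 * 2 ^ n := by
  have hterm : ∀ c, (fiberCard (fun x => F (x + s) + F x) c : ℤ) ^ 2
      = 2 * fiberCard (fun x => F (x + s) + F x) c := by
    intro c
    rcases hF.fiberCard_eq_zero_or_two hs c with h | h <;> simp [h]
  rw [sum_congr rfl fun c _ => hterm c, ← mul_sum, ← Nat.cast_sum, sum_fiberCard]
  simp

lemma IsAPNB.sum_sum_walshB_pow_four (hF : IsAPNB n F) :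
    ∑ b, ∑ a, walshB n F b a ^ 4 = (2 ^ n) ^ 3 * (3 * 2 ^ n - 2) := by
  have hderiv : ∀ s, ∑ c, (fiberCard (fun x => F (x + s) + F x) c : ℤ) ^ 2
      = 2 * 2 ^ n + if s = 0 then (2 ^ n) ^ 2 - 2 * 2 ^ n else 0 := by
    intro s
    split_ifs with hs
    · subst hs
      simp only [add_zero, ZModModule.add_self, sum_fiberCard_const_sq]
      simp
    · rw [hF.sum_fiberCard_sq hs, add_zero]
  rw [sum_sum_walshB_pow_four_eq_sum_sum_fiberCard_sq, sum_congr rfl fun s _ => hderiv s]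
  simp only [sum_add_distrib, sum_const, sum_ite_eq', if_pos (mem_univ _), card_univ,
    Fintype.card_fun, ZMod.card, Fintype.card_fin, nsmul_eq_mul]
  push_cast
  ring

end APN

section Plateaued

variable {n t : ℕ} {F : (Fin n → ZMod 2) → Fin n → ZMod 2} {b : Fin n → ZMod 2}

lemma IsTPlateauedB.sum_walshB_pow_four (h : IsTPlateauedB n F b t) :
    ∑ a, walshB n F b a ^ 4 = 2 ^ (n + t) * (2 ^ n) ^ 2 := by
  rw [← sum_walshB_sq F b, mul_sum]
  refine sum_congr rfl fun a _ => ?_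
  rw [show walshB n F b a ^ 4 = walshB n F b a ^ 2 * walshB n F b a ^ 2 by ring]
  rcases h a with ha | ha <;> simp [ha]

lemma IsTPlateauedB.exists_walshB_sq_eq (h : IsTPlateauedB n F b t) :
    ∃ a, walshB n F b a ^ 2 = 2 ^ (n + t) := by
  by_contra! hne
  have hzero : ∀ a, walshB n F b a ^ 2 = 0 := fun a => by
    rcases h a with ha | ha
    · rw [ha, sq, mul_zero]
    · exact absurd ha (hne a)
  have hsum := sum_walshB_sq F b
  simp only [hzero, sum_const_zero] at hsum
  exact (by positivity : (0 : ℤ) < (2 ^ n) ^ 2).ne hsum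

lemma IsTPlateauedB.even (hn : Even n) (h : IsTPlateauedB n F b t) : Even t := by
  obtain ⟨a, ha⟩ := h.exists_walshB_sq_eq
  exact (Nat.even_add.mp (even_of_sq_eq_two_pow ha)).mp hn

lemma IsTPlateauedB.walshB_ne_zero (h : IsTPlateauedB n F b 0) (a : Fin n → ZMod 2) :
    walshB n F b a ≠ 0 := by
  intro ha
  have hdefect : ∀ a', 0 ≤ 2 ^ n - walshB n F b a' ^ 2 := fun a' => by
    rcases h a' with h' | h' <;> simp [h']
  -- by Parseval the nonnegative defects `2^n - W(b,a')^2` sum to zero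
  have hsum : ∑ a', (2 ^ n - walshB n F b a' ^ 2) = 0 := by
    rw [sum_sub_distrib, sum_walshB_sq]
    simp [sq]
  have hle := single_le_sum (fun a' _ => hdefect a') (mem_univ a)
  rw [hsum, ha] at hle
  exact absurd hle (by simp)

lemma IsTPlateauedB.two_le_of_walshB_eq_zero (hn : Even n) (h : IsTPlateauedB n F b t)
    {a : Fin n → ZMod 2} (ha : walshB n F b a = 0) : 2 ≤ t := by
  obtain ⟨k, rfl⟩ := h.even hn
  rcases k with _ | k
  · exact absurd ha (h.walshB_ne_zero a)
  · omega

lemma IsTPlateauedB.sum_walshB_pow_four_eq_or_le (hn : Even n) (h : IsTPlateauedB n F b t) :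
    ∑ a, walshB n F b a ^ 4 = (2 ^ n) ^ 2 * walshB n F b 0 ^ 2 ∨
      (2 ^ n) ^ 2 * (walshB n F b 0 ^ 2 + 4 * 2 ^ n) ≤ ∑ a, walshB n F b a ^ 4 := by
  rw [h.sum_walshB_pow_four]
  rcases h 0 with h0 | h0
  · right
    have ht := h.two_le_of_walshB_eq_zero hn h0
    calc (2 ^ n) ^ 2 * (walshB n F b 0 ^ 2 + 4 * 2 ^ n) = 2 ^ (n + 2) * (2 ^ n) ^ 2 := by
          rw [h0]; ring
      _ ≤ 2 ^ (n + t) * (2 ^ n) ^ 2 := by gcongr; omega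
  · left
    rw [h0]; ring

lemma IsPlateauedB.exists_isTPlateauedB (h : IsPlateauedB n F) (b : Fin n → ZMod 2) : ∃ t, IsTPlateauedB n F b t := by
  by_cases hb : b = 0
  · exact ⟨n, hb ▸ isTPlateauedB_zero_left F⟩
  · exact h b hb

end Plateaued

theorem plateaued_apn_no_second_distribution_general (n : ℕ) (hne : Even n)
    (F : (Fin n → ZMod 2) → (Fin n → ZMod 2))
    (hplat : IsPlateauedB n F) (hapn : IsAPNB n F) :
    ¬ ∃ β₁ β₂ : Fin n → ZMod 2, β₁ ≠ β₂ ∧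
      (univ.filter fun x => F x = β₁).card = 2 ∧
      (univ.filter fun x => F x = β₂).card = 2 ∧
      ∀ β : Fin n → ZMod 2, β ≠ β₁ → β ≠ β₂ →
        (univ.filter fun x => F x = β).card = 0 ∨
        (univ.filter fun x => F x = β).card = 3 := by
  rintro ⟨β₁, β₂, hβ, h₁, h₂, hrest⟩
  have hfibers : ∑ y, (fiberCard F y : ℤ) ^ 2 = 3 * 2 ^ n - 4 := by
    simpa using sum_fiberCard_sq_of_two_fibers_card_two hβ h₁ h₂ hrest
  let d b := ∑ a, walshB n F b a ^ 4 - (2 ^ n) ^ 2 * walshB n F b 0 ^ 2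
  have hsum : ∑ b, d b = 2 * (2 ^ n) ^ 3 := by
    simp only [d, sum_sub_distrib, ← mul_sum, hapn.sum_sum_walshB_pow_four,
      sum_walshB_zero_right_sq, hfibers]
    ring
  have hd : ∀ b ∈ univ, d b = 0 ∨ 4 * (2 ^ n) ^ 3 ≤ d b := fun b _ => by
    obtain ⟨t, ht⟩ := hplat.exists_isTPlateauedB b
    rcases ht.sum_walshB_pow_four_eq_or_le hne with h | h
    · exact Or.inl (by simp only [d]; linarith)
    · exact Or.inr (by simp only [d]; linarith)
  rcases sum_eq_zero_or_le_sum (by positivity) hd with h | h <;> rw [hsum] at h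
  · exact (by positivity : (0 : ℤ) < 2 * (2 ^ n) ^ 3).ne' h
  · linarith [(by positivity : (0 : ℤ) < (2 ^ n) ^ 3)]

theorem plateaued_apn_no_second_distribution (n : ℕ) (hn : 0 < n) (hne : Even n)
    (F : (Fin n → ZMod 2) → (Fin n → ZMod 2))
    (hplat : IsPlateauedB n F) (hapn : IsAPNB n F) :
    ¬ ∃ β₁ β₂ : Fin n → ZMod 2, β₁ ≠ β₂ ∧
      (univ.filter fun x => F x = β₁).card = 2 ∧
      (univ.filter fun x => F x = β₂).card = 2 ∧
      ∀ β : Fin n → ZMod 2, β ≠ β₁ → β ≠ β₂ →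
        (univ.filter fun x => F x = β).card = 0 ∨
        (univ.filter fun x => F x = β).card = 3 :=
  plateaued_apn_no_second_distribution_general n hne F hplat hapn
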